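/- Achievability computations for the binary example: let p ∈ [0,1/2], ε ∈ [0,1], α, β ∈ [0,1/2]. Let A be uniform on {0,1}; let V = A ⊕ Z_α and U = V ⊕ Z_β, where Z_α, Z_β are Bernoulli(α) and Bernoulli(β) respectively; let B = BEC(ε)(A) and E = A ⊕ N_p with N_p Bernoulli(p), where A, Z_α, Z_β, N_p and the erasure event are mutually independent (so that U–V–A–(B,E) is a Markov chain). Define Â : {0,1}×{0,e,1} → {0,1} by Â(v,b) = b if b ∈ {0,1} and Â(v,e) = v, and let d be Hamming distortion. Then (i) I(V;A|B) = ε(1 − h₂(α)); (ii) E[d(A, Â(V,B))] = εα; and (iii) H(A|V,B) + I(A;B|U) − I(A;E|U) = ε h₂(α) + (1−ε) h₂(α⋆β) − h₂(p⋆α⋆β) + h₂(p), with in particular H(A|V,B) = ε h₂(α), I(A;B|U) = (1−ε) h₂(α⋆β), and I(A;E|U) = h₂(p⋆α⋆β) − h₂(p). -/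

import Mathlib

/-!
Every conditional entropy needed has the form `H(X | Y)` with a joint law that factors as
`P(y) K(y, x)` through an explicit binary channel `K`: a BSC, or the posterior of the input
of an erasure channel. Then `H(X | Y) = ∑ P(y) H(K(y, ·))`, which is `h₂` of the crossover
probability for a BSC, `0` for an unerased output and the entropy of the prior for an erasure.
`I(A;E|U)` is computed as `I(E;A|U)` so that both of its terms have this form:
`E | U ∼ BSC(p ⋆ α ⋆ β)` and `E | (A,U) ∼ BSC(p)`.
-/


noncomputable section

namespace SLSC

open scoped BigOperators

variable {Ω : Type*} [Fintype Ω]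

open Classical in
/-- Probability that the random variable `f` takes the value `x`, under the
probability mass function `w` on the finite sample space `Ω`. -/
def pr {X : Type*} (w : Ω → ℝ) (f : Ω → X) (x : X) : ℝ :=
  ∑ ω, if f ω = x then w ω else 0

/-- `w` is a probability mass function on `Ω`. -/
def IsPMF (w : Ω → ℝ) : Prop := (∀ ω, 0 ≤ w ω) ∧ ∑ ω, w ω = 1

/-- Shannon entropy (base 2) of the random variable `f`. -/
def H {X : Type*} [Fintype X] (w : Ω → ℝ) (f : Ω → X) : ℝ :=
  -∑ x, pr w f x * Real.logb 2 (pr w f x)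

/-- Conditional entropy `H(f | g)` (base 2). -/
def condH {X Y : Type*} [Fintype X] [Fintype Y] (w : Ω → ℝ) (f : Ω → X) (g : Ω → Y) : ℝ :=
  H w (fun ω => (f ω, g ω)) - H w g

/-- Mutual information `I(f ; g)` (base 2). -/
def MI {X Y : Type*} [Fintype X] [Fintype Y] (w : Ω → ℝ) (f : Ω → X) (g : Ω → Y) : ℝ :=
  H w f + H w g - H w (fun ω => (f ω, g ω))

/-- Conditional mutual information `I(f ; g | h)` (base 2). -/
def condMI {X Y Z : Type*} [Fintype X] [Fintype Y] [Fintype Z]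
    (w : Ω → ℝ) (f : Ω → X) (g : Ω → Y) (h : Ω → Z) : ℝ :=
  condH w f h - condH w f (fun ω => (g ω, h ω))

/-- Expectation of the real random variable `f`. -/
def expect (w : Ω → ℝ) (f : Ω → ℝ) : ℝ := ∑ ω, w ω * f ω

/-- Markov chain `f – g – h` : `f` and `h` are conditionally independent given `g`. -/
def Markov {X Y Z : Type*} (w : Ω → ℝ) (f : Ω → X) (g : Ω → Y) (h : Ω → Z) : Prop :=
  ∀ x y z,
    pr w (fun ω => (f ω, g ω, h ω)) (x, y, z) * pr w g y
      = pr w (fun ω => (f ω, g ω)) (x, y) * pr w (fun ω => (g ω, h ω)) (y, z)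

/-- Markov chain `f – g – h – k` : each variable is conditionally independent of
the preceding ones given its immediate predecessor. -/
def Markov4 {X Y Z T : Type*} (w : Ω → ℝ)
    (f : Ω → X) (g : Ω → Y) (h : Ω → Z) (k : Ω → T) : Prop :=
  Markov w f g h ∧ Markov w (fun ω => (f ω, g ω)) h k

variable {𝒜 ℬ ℰ : Type*} [Fintype 𝒜] [Fintype ℬ] [Fintype ℰ]

/-- Weight of the i.i.d. source `(Aⁿ,Bⁿ,Eⁿ)` with per-letter distribution `p`. -/
def iidW (p : 𝒜 × ℬ × ℰ → ℝ) (n : ℕ) : (Fin n → 𝒜 × ℬ × ℰ) → ℝ :=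
  fun ω => ∏ i, p (ω i)

/-- Alice's source sequence `Aⁿ`. -/
def An (n : ℕ) : (Fin n → 𝒜 × ℬ × ℰ) → Fin n → 𝒜 := fun ω i => (ω i).1

/-- Bob's side-information sequence `Bⁿ`. -/
def Bn (n : ℕ) : (Fin n → 𝒜 × ℬ × ℰ) → Fin n → ℬ := fun ω i => (ω i).2.1

/-- Eve's side-information sequence `Eⁿ`. -/
def En (n : ℕ) : (Fin n → 𝒜 × ℬ × ℰ) → Fin n → ℰ := fun ω i => (ω i).2.2

/-- `(R,D,Δ)` is achievable for the memoryless source `p` with distortion measure `d`: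
for every `ε > 0` there is an `(n, R+ε)`-code (encoder `f`, decoder `g`, at most
`2^{n(R+ε)}` messages) whose expected distortion at Bob is at most `D + ε` and whose
normalized equivocation at Eve is at least `Δ - ε`. -/
def Achievable (p : 𝒜 × ℬ × ℰ → ℝ) (d : 𝒜 → 𝒜 → ℝ) (R D Δ : ℝ) : Prop :=
  ∀ ε > (0 : ℝ), ∃ n M : ℕ, 0 < n ∧ 0 < M ∧
    (M : ℝ) ≤ (2 : ℝ) ^ ((n : ℝ) * (R + ε)) ∧
    ∃ (f : (Fin n → 𝒜) → Fin M) (g : Fin M → (Fin n → ℬ) → Fin n → 𝒜),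
      expect (iidW p n)
          (fun ω => ((n : ℝ))⁻¹ * ∑ i, d (An n ω i) (g (f (An n ω)) (Bn n ω) i)) ≤ D + ε ∧
      Δ - ε ≤ ((n : ℝ))⁻¹ * condH (iidW p n) (An n) (fun ω => (f (An n ω), En n ω))

/-- The single-letter region of Theorem 1, with auxiliary alphabets `Fin m` (for `U`)
and `Fin k` (for `V`): there is a joint pmf `q` of `(U,V,A,B,E)` with marginal `p`
on `(A,B,E)`, a Markov chain `U – V – A – (B,E)`, and a function `Â : 𝒱 × ℬ → 𝒜`
such that `R ≥ I(V;A|B)`, `D ≥ E[d(A, Â(V,B))]` and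
`Δ ≤ [H(A|V,B) + I(A;B|U) - I(A;E|U)]₊`. -/
def InRegion (p : 𝒜 × ℬ × ℰ → ℝ) (d : 𝒜 → 𝒜 → ℝ) (R D Δ : ℝ) (m k : ℕ) : Prop :=
  ∃ (q : Fin m × Fin k × 𝒜 × ℬ × ℰ → ℝ) (Ahat : Fin k × ℬ → 𝒜),
    IsPMF q ∧
    (∀ x : 𝒜 × ℬ × ℰ, pr q (fun ω => ω.2.2) x = p x) ∧
    Markov4 q (fun ω => ω.1) (fun ω => ω.2.1) (fun ω => ω.2.2.1) (fun ω => ω.2.2.2) ∧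
    condMI q (fun ω => ω.2.1) (fun ω => ω.2.2.1) (fun ω => ω.2.2.2.1) ≤ R ∧
    expect q (fun ω => d ω.2.2.1 (Ahat (ω.2.1, ω.2.2.2.1))) ≤ D ∧
    Δ ≤ max (condH q (fun ω => ω.2.2.1) (fun ω => (ω.2.1, ω.2.2.2.1))
          + condMI q (fun ω => ω.2.2.1) (fun ω => ω.2.2.2.1) (fun ω => ω.1)
          - condMI q (fun ω => ω.2.2.1) (fun ω => ω.2.2.2.2) (fun ω => ω.1)) 0

/-- Side information `B` (second coordinate) is less noisy than `E` (third coordinate):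
`I(U;B) ≥ I(U;E)` for every `U` such that `U – A – (B,E)` is a Markov chain. -/
def LessNoisyBE (p : 𝒜 × ℬ × ℰ → ℝ) : Prop :=
  ∀ (m : ℕ) (q : Fin m × 𝒜 × ℬ × ℰ → ℝ), IsPMF q →
    (∀ x, pr q (fun ω => ω.2) x = p x) →
    Markov q (fun ω => ω.1) (fun ω => ω.2.1) (fun ω => ω.2.2) →
    MI q (fun ω => ω.1) (fun ω => ω.2.2.2) ≤ MI q (fun ω => ω.1) (fun ω => ω.2.2.1)

/-- Side information `E` (third coordinate) is less noisy than `B` (second coordinate):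
`I(U;E) ≥ I(U;B)` for every `U` such that `U – A – (B,E)` is a Markov chain. -/
def LessNoisyEB (p : 𝒜 × ℬ × ℰ → ℝ) : Prop :=
  ∀ (m : ℕ) (q : Fin m × 𝒜 × ℬ × ℰ → ℝ), IsPMF q →
    (∀ x, pr q (fun ω => ω.2) x = p x) →
    Markov q (fun ω => ω.1) (fun ω => ω.2.1) (fun ω => ω.2.2) →
    MI q (fun ω => ω.1) (fun ω => ω.2.2.1) ≤ MI q (fun ω => ω.1) (fun ω => ω.2.2.2)

/-- The auxiliary random variable `Uᵢ = (W, B_{i+1}ⁿ, E^{i-1})` where `W = f(Aⁿ)`. -/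
def auxU {𝒲 : Type*} (n : ℕ) (f : (Fin n → 𝒜) → 𝒲) (i : Fin n)
    (ω : Fin n → 𝒜 × ℬ × ℰ) :
    𝒲 × ({j : Fin n // i < j} → ℬ) × ({j : Fin n // j < i} → ℰ) :=
  (f (An n ω), fun j => (ω j.1).2.1, fun j => (ω j.1).2.2)

/-- The auxiliary random variable `Vᵢ = (W, A^{i-1}, B^{i-1}, B_{i+1}ⁿ, E^{i-1})`
where `W = f(Aⁿ)`. -/
def auxV {𝒲 : Type*} (n : ℕ) (f : (Fin n → 𝒜) → 𝒲) (i : Fin n)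
    (ω : Fin n → 𝒜 × ℬ × ℰ) :
    𝒲 × ({j : Fin n // j < i} → 𝒜) × ({j : Fin n // j < i} → ℬ)
      × ({j : Fin n // i < j} → ℬ) × ({j : Fin n // j < i} → ℰ) :=
  (f (An n ω), fun j => (ω j.1).1, fun j => (ω j.1).2.1,
    fun j => (ω j.1).2.1, fun j => (ω j.1).2.2)

/-- Binary symmetric channel with crossover probability `p`: `BSC p a e` is the
probability that the output is `e` given that the input is `a`. -/
def BSC (p : ℝ) (a e : Bool) : ℝ := if e = a then 1 - p else p

/-- Binary erasure channel with erasure probability `ε` (output `none` is the erasure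
symbol): `BEC ε a b` is the probability that the output is `b` given input `a`. -/
def BEC (ε : ℝ) (a : Bool) (b : Option Bool) : ℝ :=
  match b with
  | some b' => if b' = a then 1 - ε else 0
  | none => ε

/-- Binary entropy function (base 2). -/
def h2 (x : ℝ) : ℝ := -(x * Real.logb 2 x) - (1 - x) * Real.logb 2 (1 - x)

/-- `sop a b = a ⋆ b = a(1-b) + (1-a)b`. -/
def sop (a b : ℝ) : ℝ := a * (1 - b) + (1 - a) * b

/-- Hamming distortion on `Bool`. -/
def hamming (a a' : Bool) : ℝ := if a = a' then 0 else 1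

/-- Joint distribution of `(A,B,E)` for a uniform binary source `A`, with
`B = BEC(ε)(A)` at Bob and `E = BSC(p)(A)` at Eve (independent channel noises). -/
def binSrc (p ε : ℝ) : Bool × Option Bool × Bool → ℝ :=
  fun x => (1 / 2) * BEC ε x.1 x.2.1 * BSC p x.1 x.2.2

/-- Joint distribution of `(U,V,A,B,E)` in the achievability scheme for the binary
example: `A` uniform, `V = A ⊕ Z_α`, `U = V ⊕ Z_β`, `B = BEC(ε)(A)`, `E = A ⊕ N_p`,
with all noises mutually independent.  Coordinates: `(u,v,a,b,e)`. -/
def exJoint (p ε α β : ℝ) : Bool × Bool × Bool × Option Bool × Bool → ℝ :=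
  fun x =>
    (1 / 2) * BSC α x.2.2.1 x.2.1 * BSC β x.2.1 x.1
      * BEC ε x.2.2.1 x.2.2.2.1 * BSC p x.2.2.1 x.2.2.2.2

open Real

section Entropy

variable {X Y Z : Type*}

def negMulLogb (x : ℝ) : ℝ := negMulLog x / log 2

lemma negMulLogb_mul (x y : ℝ) : negMulLogb (x * y) = y * negMulLogb x + x * negMulLogb y := by
  simp only [negMulLogb, negMulLog_mul]
  ring

@[simp] lemma negMulLogb_zero : negMulLogb 0 = 0 := by simp [negMulLogb]

@[simp] lemma negMulLogb_one : negMulLogb 1 = 0 := by simp [negMulLogb]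

@[simp] lemma negMulLogb_inv_two : negMulLogb 2⁻¹ = 2⁻¹ := by
  have : log 2 ≠ 0 := by positivity
  simp only [negMulLogb, negMulLog, log_inv]
  field_simp

lemma H_eq_sum_negMulLogb [Fintype X] (w : Ω → ℝ) (f : Ω → X) :
    H w f = ∑ x, negMulLogb (pr w f x) := by
  simp only [H, negMulLogb, negMulLog, logb, ← Finset.sum_neg_distrib]
  congr 1 with x
  ring

lemma h2_eq_negMulLogb (x : ℝ) : h2 x = negMulLogb x + negMulLogb (1 - x) := by
  simp only [h2, negMulLogb, negMulLog, logb]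
  ring

lemma pr_comp_equiv (w : Ω → ℝ) (f : Ω → X) (e : X ≃ Y) (y : Y) :
    pr w (fun ω => e (f ω)) y = pr w f (e.symm y) := by
  classical
  simp only [pr, ← Equiv.eq_symm_apply]

lemma H_comp_equiv [Fintype X] [Fintype Y] (w : Ω → ℝ) (f : Ω → X) (e : X ≃ Y) :
    H w (fun ω => e (f ω)) = H w f := by
  simp only [H, pr_comp_equiv]
  rw [e.symm.sum_comp (fun x => pr w f x * logb 2 (pr w f x))]

lemma pr_apply_of_injective {w : Ω → ℝ} {f : Ω → X} (hf : Function.Injective f) (ω : Ω) :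
    pr w f (f ω) = w ω := by
  classical
  simp [pr, hf.eq_iff]

lemma pr_eq_sum_pr_pair [Fintype X] (w : Ω → ℝ) (f : Ω → X) (g : Ω → Y) (y : Y) :
    pr w g y = ∑ x, pr w (fun ω => (f ω, g ω)) (x, y) := by
  classical
  simp only [pr]
  rw [Finset.sum_comm]
  congr 1 with ω
  by_cases hy : g ω = y <;> simp [hy, Prod.ext_iff]

lemma sum_pr [Fintype X] (w : Ω → ℝ) (f : Ω → X) : ∑ x, pr w f x = ∑ ω, w ω := by
  classical
  simp only [pr]
  rw [Finset.sum_comm]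
  simp

lemma condMI_comm [Fintype X] [Fintype Y] [Fintype Z] (w : Ω → ℝ)
    (f : Ω → X) (g : Ω → Y) (h : Ω → Z) : condMI w f g h = condMI w g f h := by
  let swap : X × Y × Z ≃ Y × X × Z :=
    { toFun := fun t => (t.2.1, t.1, t.2.2), invFun := fun t => (t.2.1, t.1, t.2.2),
      left_inv := fun _ => rfl, right_inv := fun _ => rfl }
  have hswap : H w (fun ω => (g ω, f ω, h ω)) = H w (fun ω => (f ω, g ω, h ω)) :=
    H_comp_equiv w (fun ω => (f ω, g ω, h ω)) swap
  simp only [condMI, condH, hswap]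
  ring

lemma condH_eq_sum_of_pr_eq_mul [Fintype X] [Fintype Y] {w : Ω → ℝ} {f : Ω → X} {g : Ω → Y}
    (K : Y → X → ℝ) (hK : ∀ x y, pr w (fun ω => (f ω, g ω)) (x, y) = pr w g y * K y x)
    (hK1 : ∀ y, ∑ x, K y x = 1) :
    condH w f g = ∑ y, pr w g y * ∑ x, negMulLogb (K y x) := by
  simp only [condH, H_eq_sum_negMulLogb, Fintype.sum_prod_type, hK, negMulLogb_mul]
  rw [Finset.sum_comm]
  simp only [Finset.sum_add_distrib, ← Finset.sum_mul, ← Finset.mul_sum, hK1]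
  ring

lemma markov_of_pr_eq_mul [Fintype X] {w : Ω → ℝ} {f : Ω → X} {g : Ω → Y} {h : Ω → Z}
    (K : Y → Z → ℝ)
    (hK : ∀ x y z,
      pr w (fun ω => (f ω, g ω, h ω)) (x, y, z) = pr w (fun ω => (f ω, g ω)) (x, y) * K y z) :
    Markov w f g h := by
  intro x y z
  have hgh : pr w (fun ω => (g ω, h ω)) (y, z) = pr w g y * K y z := by
    rw [pr_eq_sum_pr_pair w f, pr_eq_sum_pr_pair w f g, Finset.sum_mul]
    exact Finset.sum_congr rfl fun x _ => hK x y z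
  rw [hK, hgh]
  ring

end Entropy

section BinaryChannels

lemma sum_BSC (q : ℝ) (a : Bool) : ∑ e, BSC q a e = 1 := by
  cases a <;> simp [BSC]

lemma sum_negMulLogb_BSC (q : ℝ) (a : Bool) : ∑ e, negMulLogb (BSC q a e) = h2 q := by
  cases a <;> simp [BSC, h2_eq_negMulLogb, add_comm]

/-- Law of the input of an erasure channel given its output `b`, when the input has law
`prior`. -/
def erasurePosterior (prior : Bool → ℝ) (b : Option Bool) (a : Bool) : ℝ :=
  b.elim (prior a) fun b' => if a = b' then 1 else 0

lemma sum_erasurePosterior {prior : Bool → ℝ} (h : ∑ a, prior a = 1) (b : Option Bool) :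
    ∑ a, erasurePosterior prior b a = 1 := by
  cases b with
  | none => exact h
  | some b' => simp [erasurePosterior]

lemma sum_negMulLogb_erasurePosterior (prior : Bool → ℝ) (b : Option Bool) :
    ∑ a, negMulLogb (erasurePosterior prior b a)
      = b.elim (∑ a, negMulLogb (prior a)) fun _ => 0 := by
  rcases b with _ | _ | _ <;> simp [erasurePosterior]

end BinaryChannels

section BinaryExample

variable (p ε α β : ℝ)

lemma sum_exJoint : ∑ ω, exJoint p ε α β ω = 1 := by
  simp [exJoint, BSC, BEC, Fintype.sum_prod_type, Fintype.sum_option]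
  ring

lemma pr_exJoint_UVA (u v a : Bool) :
    pr (exJoint p ε α β) (fun ω => (ω.1, ω.2.1, ω.2.2.1)) (u, v, a)
      = pr (exJoint p ε α β) (fun ω => (ω.1, ω.2.1)) (u, v) * BSC α v a := by
  cases u <;> cases v <;> cases a <;>
    simp [pr, exJoint, BSC, BEC, Fintype.sum_prod_type, Fintype.sum_option] <;> ring

lemma pr_exJoint_UV_A (u v a : Bool) :
    pr (exJoint p ε α β) (fun ω => ((ω.1, ω.2.1), ω.2.2.1)) ((u, v), a)
      = 1 / 2 * BSC α a v * BSC β v u := by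
  cases u <;> cases v <;> cases a <;>
    simp [pr, exJoint, BSC, BEC, Fintype.sum_prod_type, Fintype.sum_option] <;> ring

lemma pr_exJoint_UVABE (u v a : Bool) (b : Option Bool) (e : Bool) :
    pr (exJoint p ε α β) (fun ω => ((ω.1, ω.2.1), ω.2.2.1, ω.2.2.2)) ((u, v), a, (b, e))
      = pr (exJoint p ε α β) (fun ω => ((ω.1, ω.2.1), ω.2.2.1)) ((u, v), a)
        * (BEC ε a b * BSC p a e) := by
  have hinj : Function.Injective fun ω : Bool × Bool × Bool × Option Bool × Bool =>
      ((ω.1, ω.2.1), ω.2.2.1, ω.2.2.2) := fun _ _ h => by simpa [Prod.ext_iff, and_assoc] using h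
  rw [pr_exJoint_UV_A, pr_apply_of_injective hinj (u, v, a, b, e), exJoint]
  ring

lemma pr_exJoint_B (b : Option Bool) :
    pr (exJoint p ε α β) (fun ω => ω.2.2.2.1) b = b.elim ε fun _ => (1 - ε) / 2 := by
  rcases b with _ | _ | _ <;>
    simp [pr, exJoint, BSC, BEC, Fintype.sum_prod_type] <;> ring

lemma pr_exJoint_VB (v : Bool) (b : Option Bool) :
    pr (exJoint p ε α β) (fun ω => (ω.2.1, ω.2.2.2.1)) (v, b)
      = pr (exJoint p ε α β) (fun ω => ω.2.2.2.1) b * b.elim (1 / 2) fun a => BSC α a v := by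
  cases v <;> rcases b with _ | _ | _ <;>
    simp [pr, exJoint, BSC, BEC, Fintype.sum_prod_type, Fintype.sum_option] <;> ring

lemma pr_exJoint_VAB (v a : Bool) (b : Option Bool) :
    pr (exJoint p ε α β) (fun ω => (ω.2.1, ω.2.2.1, ω.2.2.2.1)) (v, a, b)
      = pr (exJoint p ε α β) (fun ω => (ω.2.2.1, ω.2.2.2.1)) (a, b) * BSC α a v := by
  cases v <;> cases a <;> rcases b with _ | _ | _ <;>
    simp [pr, exJoint, BSC, BEC, Fintype.sum_prod_type, Fintype.sum_option] <;> ring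

lemma pr_exJoint_AVB (a v : Bool) (b : Option Bool) :
    pr (exJoint p ε α β) (fun ω => (ω.2.2.1, ω.2.1, ω.2.2.2.1)) (a, v, b)
      = pr (exJoint p ε α β) (fun ω => (ω.2.1, ω.2.2.2.1)) (v, b)
        * erasurePosterior (BSC α v) b a := by
  cases v <;> cases a <;> rcases b with _ | _ | _ <;>
    simp [pr, exJoint, BSC, BEC, erasurePosterior, Fintype.sum_prod_type,
      Fintype.sum_option] <;> ring

lemma pr_exJoint_AU (a u : Bool) :
    pr (exJoint p ε α β) (fun ω => (ω.2.2.1, ω.1)) (a, u)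
      = pr (exJoint p ε α β) (fun ω => ω.1) u * BSC (sop α β) u a := by
  cases a <;> cases u <;>
    simp [pr, exJoint, BSC, BEC, sop, Fintype.sum_prod_type, Fintype.sum_option] <;> ring

lemma pr_exJoint_ABU (a : Bool) (b : Option Bool) (u : Bool) :
    pr (exJoint p ε α β) (fun ω => (ω.2.2.1, ω.2.2.2.1, ω.1)) (a, b, u)
      = pr (exJoint p ε α β) (fun ω => (ω.2.2.2.1, ω.1)) (b, u)
        * erasurePosterior (BSC (sop α β) u) b a := by
  cases a <;> cases u <;> rcases b with _ | _ | _ <;>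
    simp [pr, exJoint, BSC, BEC, sop, erasurePosterior, Fintype.sum_prod_type,
      Fintype.sum_option] <;> ring

lemma pr_exJoint_BU_none (u : Bool) :
    pr (exJoint p ε α β) (fun ω => (ω.2.2.2.1, ω.1)) (none, u) = ε / 2 := by
  cases u <;> simp [pr, exJoint, BSC, BEC, Fintype.sum_prod_type, Fintype.sum_option] <;> ring

lemma pr_exJoint_EU (e u : Bool) :
    pr (exJoint p ε α β) (fun ω => (ω.2.2.2.2, ω.1)) (e, u)
      = pr (exJoint p ε α β) (fun ω => ω.1) u * BSC (sop p (sop α β)) u e := by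
  cases e <;> cases u <;>
    simp [pr, exJoint, BSC, BEC, sop, Fintype.sum_prod_type, Fintype.sum_option] <;> ring

lemma pr_exJoint_EAU (e a u : Bool) :
    pr (exJoint p ε α β) (fun ω => (ω.2.2.2.2, ω.2.2.1, ω.1)) (e, a, u)
      = pr (exJoint p ε α β) (fun ω => (ω.2.2.1, ω.1)) (a, u) * BSC p a e := by
  cases e <;> cases a <;> cases u <;>
    simp [pr, exJoint, BSC, BEC, Fintype.sum_prod_type, Fintype.sum_option] <;> ring

lemma markov4_exJoint :
    Markov4 (exJoint p ε α β) (fun ω => ω.1) (fun ω => ω.2.1)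
      (fun ω => ω.2.2.1) (fun ω => ω.2.2.2) :=
  ⟨markov_of_pr_eq_mul (BSC α) (pr_exJoint_UVA p ε α β),
    markov_of_pr_eq_mul (fun a be => BEC ε a be.1 * BSC p a be.2)
      fun _ _ _ => pr_exJoint_UVABE p ε α β _ _ _ _ _⟩

lemma expect_hamming_exJoint :
    expect (exJoint p ε α β) (fun ω => hamming ω.2.2.1 ((ω.2.2.2.1).getD ω.2.1)) = ε * α := by
  simp [expect, exJoint, hamming, BSC, BEC, Fintype.sum_prod_type, Fintype.sum_option]
  ring

lemma condH_exJoint_V_B :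
    condH (exJoint p ε α β) (fun ω => ω.2.1) (fun ω => ω.2.2.2.1) = (1 - ε) * h2 α + ε := by
  rw [condH_eq_sum_of_pr_eq_mul _ (pr_exJoint_VB p ε α β)]
  · simp only [Fintype.sum_option, Option.elim, pr_exJoint_B, sum_negMulLogb_BSC]
    simp only [Fintype.sum_bool, one_div, negMulLogb_inv_two]
    ring
  · rintro (_ | b)
    · norm_num
    · exact sum_BSC α b

lemma condH_exJoint_V_AB :
    condH (exJoint p ε α β) (fun ω => ω.2.1) (fun ω => (ω.2.2.1, ω.2.2.2.1)) = h2 α := by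
  rw [condH_eq_sum_of_pr_eq_mul _ (fun v ab => pr_exJoint_VAB p ε α β v ab.1 ab.2)
    fun ab => sum_BSC α ab.1]
  simp only [sum_negMulLogb_BSC, ← Finset.sum_mul, sum_pr, sum_exJoint, one_mul]

lemma condH_exJoint_A_VB :
    condH (exJoint p ε α β) (fun ω => ω.2.2.1) (fun ω => (ω.2.1, ω.2.2.2.1)) = ε * h2 α := by
  rw [condH_eq_sum_of_pr_eq_mul _ (fun a vb => pr_exJoint_AVB p ε α β a vb.1 vb.2)
    fun vb => sum_erasurePosterior (sum_BSC α vb.1) vb.2]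
  simp only [sum_negMulLogb_erasurePosterior, sum_negMulLogb_BSC, Fintype.sum_prod_type,
    Fintype.sum_option, Option.elim, pr_exJoint_VB, pr_exJoint_B]
  simp only [mul_zero, Finset.sum_const_zero, add_zero, Fintype.sum_bool]
  ring

lemma condH_exJoint_A_U :
    condH (exJoint p ε α β) (fun ω => ω.2.2.1) (fun ω => ω.1) = h2 (sop α β) := by
  rw [condH_eq_sum_of_pr_eq_mul _ (pr_exJoint_AU p ε α β) (sum_BSC _)]
  simp only [sum_negMulLogb_BSC, ← Finset.sum_mul, sum_pr, sum_exJoint, one_mul]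

lemma condH_exJoint_A_BU :
    condH (exJoint p ε α β) (fun ω => ω.2.2.1) (fun ω => (ω.2.2.2.1, ω.1))
      = ε * h2 (sop α β) := by
  rw [condH_eq_sum_of_pr_eq_mul _ (fun a bu => pr_exJoint_ABU p ε α β a bu.1 bu.2)
    fun bu => sum_erasurePosterior (sum_BSC _ bu.2) bu.1]
  simp only [sum_negMulLogb_erasurePosterior, sum_negMulLogb_BSC, Fintype.sum_prod_type,
    Fintype.sum_option, Option.elim, pr_exJoint_BU_none]
  simp only [mul_zero, Finset.sum_const_zero, add_zero, Fintype.sum_bool]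
  ring

lemma condH_exJoint_E_U :
    condH (exJoint p ε α β) (fun ω => ω.2.2.2.2) (fun ω => ω.1) = h2 (sop p (sop α β)) := by
  rw [condH_eq_sum_of_pr_eq_mul _ (pr_exJoint_EU p ε α β) (sum_BSC _)]
  simp only [sum_negMulLogb_BSC, ← Finset.sum_mul, sum_pr, sum_exJoint, one_mul]

lemma condH_exJoint_E_AU :
    condH (exJoint p ε α β) (fun ω => ω.2.2.2.2) (fun ω => (ω.2.2.1, ω.1)) = h2 p := by
  rw [condH_eq_sum_of_pr_eq_mul _ (fun e au => pr_exJoint_EAU p ε α β e au.1 au.2)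
    fun au => sum_BSC p au.1]
  simp only [sum_negMulLogb_BSC, ← Finset.sum_mul, sum_pr, sum_exJoint, one_mul]

end BinaryExample

theorem binary_achievability_computations_general (p ε α β : ℝ) :
    Markov4 (exJoint p ε α β) (fun ω => ω.1) (fun ω => ω.2.1)
        (fun ω => ω.2.2.1) (fun ω => ω.2.2.2) ∧
    condMI (exJoint p ε α β) (fun ω => ω.2.1) (fun ω => ω.2.2.1)
        (fun ω => ω.2.2.2.1) = ε * (1 - h2 α) ∧
    expect (exJoint p ε α β)
        (fun ω => hamming ω.2.2.1 ((ω.2.2.2.1).getD ω.2.1)) = ε * α ∧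
    condH (exJoint p ε α β) (fun ω => ω.2.2.1) (fun ω => (ω.2.1, ω.2.2.2.1))
        = ε * h2 α ∧
    condMI (exJoint p ε α β) (fun ω => ω.2.2.1) (fun ω => ω.2.2.2.1) (fun ω => ω.1)
        = (1 - ε) * h2 (sop α β) ∧
    condMI (exJoint p ε α β) (fun ω => ω.2.2.1) (fun ω => ω.2.2.2.2) (fun ω => ω.1)
        = h2 (sop p (sop α β)) - h2 p ∧
    condH (exJoint p ε α β) (fun ω => ω.2.2.1) (fun ω => (ω.2.1, ω.2.2.2.1))
        + condMI (exJoint p ε α β) (fun ω => ω.2.2.1) (fun ω => ω.2.2.2.1) (fun ω => ω.1)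
        - condMI (exJoint p ε α β) (fun ω => ω.2.2.1) (fun ω => ω.2.2.2.2) (fun ω => ω.1)
      = ε * h2 α + (1 - ε) * h2 (sop α β) - h2 (sop p (sop α β)) + h2 p := by
  have hVA_B : condMI (exJoint p ε α β) (fun ω => ω.2.1) (fun ω => ω.2.2.1)
      (fun ω => ω.2.2.2.1) = ε * (1 - h2 α) := by
    rw [condMI, condH_exJoint_V_B, condH_exJoint_V_AB]
    ring
  have hAB_U : condMI (exJoint p ε α β) (fun ω => ω.2.2.1) (fun ω => ω.2.2.2.1) (fun ω => ω.1)
      = (1 - ε) * h2 (sop α β) := by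
    rw [condMI, condH_exJoint_A_U, condH_exJoint_A_BU]
    ring
  have hAE_U : condMI (exJoint p ε α β) (fun ω => ω.2.2.1) (fun ω => ω.2.2.2.2) (fun ω => ω.1)
      = h2 (sop p (sop α β)) - h2 p := by
    rw [condMI_comm, condMI, condH_exJoint_E_U, condH_exJoint_E_AU]
  refine ⟨markov4_exJoint p ε α β, hVA_B, expect_hamming_exJoint p ε α β,
    condH_exJoint_A_VB p ε α β, hAB_U, hAE_U, ?_⟩
  rw [condH_exJoint_A_VB, hAB_U, hAE_U]
  ring

/-- **Achievability computations for the binary example**: with `A` uniform,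
`V = A ⊕ Z_α`, `U = V ⊕ Z_β`, `B = BEC(ε)(A)`, `E = A ⊕ N_p` (all noises mutually
independent) and `Â(v,b) = b` if `b ∈ {0,1}`, `Â(v,e) = v`:
`U – V – A – (B,E)` is a Markov chain, `I(V;A|B) = ε(1 - h₂(α))`,
`E[d(A,Â(V,B))] = εα`, `H(A|V,B) = ε h₂(α)`, `I(A;B|U) = (1-ε) h₂(α⋆β)`,
`I(A;E|U) = h₂(p⋆α⋆β) - h₂(p)`, and therefore
`H(A|V,B) + I(A;B|U) - I(A;E|U) = ε h₂(α) + (1-ε) h₂(α⋆β) - h₂(p⋆α⋆β) + h₂(p)`. -/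
theorem binary_achievability_computations (p ε α β : ℝ)
    (hp : p ∈ Set.Icc (0 : ℝ) (1 / 2)) (hε : ε ∈ Set.Icc (0 : ℝ) 1)
    (hα : α ∈ Set.Icc (0 : ℝ) (1 / 2)) (hβ : β ∈ Set.Icc (0 : ℝ) (1 / 2)) :
    Markov4 (exJoint p ε α β) (fun ω => ω.1) (fun ω => ω.2.1)
        (fun ω => ω.2.2.1) (fun ω => ω.2.2.2) ∧
    condMI (exJoint p ε α β) (fun ω => ω.2.1) (fun ω => ω.2.2.1)
        (fun ω => ω.2.2.2.1) = ε * (1 - h2 α) ∧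
    expect (exJoint p ε α β)
        (fun ω => hamming ω.2.2.1 ((ω.2.2.2.1).getD ω.2.1)) = ε * α ∧
    condH (exJoint p ε α β) (fun ω => ω.2.2.1) (fun ω => (ω.2.1, ω.2.2.2.1))
        = ε * h2 α ∧
    condMI (exJoint p ε α β) (fun ω => ω.2.2.1) (fun ω => ω.2.2.2.1) (fun ω => ω.1)
        = (1 - ε) * h2 (sop α β) ∧
    condMI (exJoint p ε α β) (fun ω => ω.2.2.1) (fun ω => ω.2.2.2.2) (fun ω => ω.1)
        = h2 (sop p (sop α β)) - h2 p ∧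
    condH (exJoint p ε α β) (fun ω => ω.2.2.1) (fun ω => (ω.2.1, ω.2.2.2.1))
        + condMI (exJoint p ε α β) (fun ω => ω.2.2.1) (fun ω => ω.2.2.2.1) (fun ω => ω.1)
        - condMI (exJoint p ε α β) (fun ω => ω.2.2.1) (fun ω => ω.2.2.2.2) (fun ω => ω.1)
      = ε * h2 α + (1 - ε) * h2 (sop α β) - h2 (sop p (sop α β)) + h2 p :=
  binary_achievability_computations_general p ε α β

end SLSC

end
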